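/- If X and Y are zero-mean divergence-free vector fields on 𝕋³_ε, with X smooth and Y ∈ H¹, both independent of the third coordinate, then the horizontal part of their Lie bracket satisfies X·∇Y^H − Y·∇X^H = −∇_H^⊥ ( X · ∇ K³_ε[Y] ), where K³_ε[Y] is the third component of the vector potential K_ε[Y] = (−Δ)^{-1} curl Y and ∇_H^⊥ = (−∂₂, ∂₁). -/

import Mathlib

open MeasureTheory Real

def box (ε : ℝ) : Set (Fin 3 → ℝ) :=
  Set.univ.pi fun i => Set.Icc 0 (![2 * π, 2 * π, 2 * π * ε] i)

def IsPeriodic (ε : ℝ) (f : (Fin 3 → ℝ) → ℝ) : Prop :=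
  ∀ x : Fin 3 → ℝ, ∀ i : Fin 3, f (x + Pi.single i (![2 * π, 2 * π, 2 * π * ε] i)) = f x

noncomputable def pd (i : Fin 3) (f : (Fin 3 → ℝ) → ℝ) (x : Fin 3 → ℝ) : ℝ :=
  fderiv ℝ f x (Pi.single i 1)

noncomputable def adv (u v : (Fin 3 → ℝ) → Fin 3 → ℝ) (x : Fin 3 → ℝ) (i : Fin 3) : ℝ :=
  ∑ j : Fin 3, u x j * pd j (fun y => v y i) x

noncomputable def curlV (u : (Fin 3 → ℝ) → Fin 3 → ℝ) (x : Fin 3 → ℝ) : Fin 3 → ℝ :=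
  ![pd 1 (fun y => u y 2) x - pd 2 (fun y => u y 1) x,
    pd 2 (fun y => u y 0) x - pd 0 (fun y => u y 2) x,
    pd 0 (fun y => u y 1) x - pd 1 (fun y => u y 0) x]

def DivFree (u : (Fin 3 → ℝ) → Fin 3 → ℝ) : Prop :=
  ∀ x, (∑ i : Fin 3, pd i (fun y => u y i) x) = 0

def IsPeriodicV (ε : ℝ) (u : (Fin 3 → ℝ) → Fin 3 → ℝ) : Prop :=
  ∀ i : Fin 3, IsPeriodic ε fun y => u y i

def sgl (i : Fin 3) : Fin 3 → ℝ := Pi.single i 1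

private lemma line_eq (x : Fin 3 → ℝ) (t : ℝ) :
    x + t • sgl 2 = Function.update x 2 (x 2 + t) := by
  funext i
  rcases eq_or_ne i 2 with h | h
  · subst h; simp [sgl]
  · simp [sgl, Function.update_of_ne h, Pi.single_eq_of_ne h]

private lemma pd2_zero (f : (Fin 3 → ℝ) → ℝ) (hf : Differentiable ℝ f)
    (hind : ∀ x t, f (Function.update x 2 t) = f x) (x : Fin 3 → ℝ) :
    pd 2 f x = 0 := by
  have hc : HasDerivAt (fun t : ℝ => x + t • sgl 2) (sgl 2) 0 := by
    simpa using ((hasDerivAt_id (0 : ℝ)).smul_const (sgl 2)).const_add x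
  have hx0 : x + (0 : ℝ) • sgl 2 = x := by simp
  have h1 : HasDerivAt (fun t : ℝ => f (x + t • sgl 2)) (fderiv ℝ f x (sgl 2)) 0 := by
    have hfd : HasFDerivAt f (fderiv ℝ f x) (x + (0 : ℝ) • sgl 2) := by
      rw [hx0]; exact (hf x).hasFDerivAt
    exact hfd.comp_hasDerivAt 0 hc
  have h2 : (fun t : ℝ => f (x + t • sgl 2)) = fun _ => f x := by
    funext t; rw [line_eq, hind]
  rw [h2] at h1
  have := h1.unique (hasDerivAt_const 0 (f x))
  simpa [pd, sgl] using this

private lemma pd_comm (f : (Fin 3 → ℝ) → ℝ) (hf : ContDiff ℝ 2 f)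
    (x : Fin 3 → ℝ) (i j : Fin 3) :
    pd i (pd j f) x = pd j (pd i f) x := by
  have hfd : ContDiff ℝ 1 (fderiv ℝ f) := hf.fderiv_right (by norm_num)
  have hsym := hf.contDiffAt.isSymmSndFDerivAt (x := x) (by norm_num)
  have key : ∀ a b : Fin 3,
      pd a (pd b f) x = fderiv ℝ (fderiv ℝ f) x (sgl a) (sgl b) := by
    intro a b
    have hclm := fderiv_clm_apply (c := fderiv ℝ f) (u := fun _ => sgl b) (x := x)
      (hfd.differentiable one_ne_zero x) (differentiableAt_const _)
    calc pd a (pd b f) x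
        = (fderiv ℝ (fun y => (fderiv ℝ f y) ((fun _ : Fin 3 → ℝ => sgl b) y)) x) (sgl a) := rfl
      _ = fderiv ℝ (fderiv ℝ f) x (sgl a) (sgl b) := by rw [hclm]; simp
  rw [key, key, hsym (sgl i) (sgl j)]

private lemma pd_mul (i : Fin 3) (f g : (Fin 3 → ℝ) → ℝ) (x : Fin 3 → ℝ)
    (hf : DifferentiableAt ℝ f x) (hg : DifferentiableAt ℝ g x) :
    pd i (fun y => f y * g y) x = pd i f x * g x + f x * pd i g x := by
  unfold pd
  rw [fderiv_fun_mul hf hg]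
  simp
  ring

private lemma pd_add (i : Fin 3) (f g : (Fin 3 → ℝ) → ℝ) (x : Fin 3 → ℝ)
    (hf : DifferentiableAt ℝ f x) (hg : DifferentiableAt ℝ g x) :
    pd i (fun y => f y + g y) x = pd i f x + pd i g x := by
  unfold pd
  rw [fderiv_fun_add hf hg]
  simp

private lemma pd_neg (i : Fin 3) (f : (Fin 3 → ℝ) → ℝ) (x : Fin 3 → ℝ) :
    pd i (fun y => -(f y)) x = -(pd i f x) := by
  unfold pd
  rw [fderiv_fun_neg]
  simp


/-- For zero-mean divergence-free `X, Y` independent of the third coordinate, with vector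
potential `Z = K_ε[Y]`, the horizontal part of the Lie bracket satisfies
`X·∇Y^H − Y·∇X^H = −∇_H^⊥(X·∇K³_ε[Y])`, with `∇_H^⊥ = (−∂₂, ∂₁)` and `K³_ε[Y] = Z₃`. -/
theorem stmt_11 (ε : ℝ) (hε : 0 < ε)
    (X Y Z : (Fin 3 → ℝ) → Fin 3 → ℝ)
    (hX : ContDiff ℝ (⊤ : ℕ∞) X) (hXp : IsPeriodicV ε X) (hXd : DivFree X)
    (hX0 : ∀ i : Fin 3, (∫ x in box ε, X x i) = 0)
    (hXind : ∀ x t, X (Function.update x 2 t) = X x)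
    (hY : ContDiff ℝ 1 Y) (hYp : IsPeriodicV ε Y) (hYd : DivFree Y)
    (hY0 : ∀ i : Fin 3, (∫ x in box ε, Y x i) = 0)
    (hYind : ∀ x t, Y (Function.update x 2 t) = Y x)
    -- `Z = K_ε[Y]`: the divergence-free vector potential of `Y`
    (hZ : ContDiff ℝ 2 Z) (hZp : IsPeriodicV ε Z) (hZd : DivFree Z)
    (hZcurl : ∀ x, curlV Z x = Y x)
    (hZind : ∀ x t, Z (Function.update x 2 t) = Z x) :
    ∀ x,
      (adv X Y x 0 - adv Y X x 0 =
        pd 1 (fun y => ∑ j : Fin 3, X y j * pd j (fun z => Z z 2) y) x) ∧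
      (adv X Y x 1 - adv Y X x 1 =
        -(pd 0 (fun y => ∑ j : Fin 3, X y j * pd j (fun z => Z z 2) y) x)) := by
  have hXc : ∀ i, ContDiff ℝ (⊤ : ℕ∞) (fun y => X y i) := fun i => contDiff_pi.mp hX i
  have hYc : ∀ i, ContDiff ℝ 1 (fun y => Y y i) := fun i => contDiff_pi.mp hY i
  have hZc : ∀ i, ContDiff ℝ 2 (fun y => Z y i) := fun i => contDiff_pi.mp hZ i
  set ψ : (Fin 3 → ℝ) → ℝ := fun y => Z y 2 with hψdef
  have hψ : ContDiff ℝ 2 ψ := hZc 2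
  have hpdψ : ∀ j, ContDiff ℝ 1 (pd j ψ) := by
    intro j
    have h1 : ContDiff ℝ 1 (fderiv ℝ ψ) := hψ.fderiv_right (by norm_num)
    exact h1.clm_apply contDiff_const
  have hψ2 : ∀ y, pd 2 ψ y = 0 :=
    pd2_zero ψ (hψ.differentiable (by norm_num)) (fun y t => congrFun (hZind y t) 2)
  have hZ12 : ∀ y, pd 2 (fun w => Z w 1) y = 0 :=
    pd2_zero _ ((hZc 1).differentiable (by norm_num)) (fun y t => congrFun (hZind y t) 1)
  have hZ02 : ∀ y, pd 2 (fun w => Z w 0) y = 0 :=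
    pd2_zero _ ((hZc 0).differentiable (by norm_num)) (fun y t => congrFun (hZind y t) 0)
  have hY2z : ∀ i y, pd 2 (fun w => Y w i) y = 0 := fun i y =>
    pd2_zero _ ((hYc i).differentiable one_ne_zero) (fun w t => congrFun (hYind w t) i) y
  have hX2z : ∀ i y, pd 2 (fun w => X w i) y = 0 := fun i y =>
    pd2_zero _ ((hXc i).differentiable (by simp)) (fun w t => congrFun (hXind w t) i) y
  have hY0f : (fun y => Y y 0) = pd 1 ψ := by
    funext y
    have h := congrFun (hZcurl y) 0
    rw [← h]
    simp only [curlV, Matrix.cons_val_zero]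
    rw [hZ12 y, sub_zero]
  have hY1f : (fun y => Y y 1) = fun y => -(pd 0 ψ y) := by
    funext y
    have h := congrFun (hZcurl y) 1
    rw [← h]
    simp only [curlV, Matrix.cons_val_one, Matrix.head_cons, Matrix.cons_val_zero]
    rw [hZ02 y]
    ring_nf
    rfl
  intro x
  have hdiv : pd 0 (fun y => X y 0) x + pd 1 (fun y => X y 1) x = 0 := by
    have h := hXd x
    rw [Fin.sum_univ_three, hX2z 2 x] at h
    linarith
  have hsum : (fun y => ∑ j : Fin 3, X y j * pd j (fun z => Z z 2) y)
      = fun y => X y 0 * pd 0 ψ y + X y 1 * pd 1 ψ y := by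
    funext y
    rw [Fin.sum_univ_three, hψ2 y]
    ring
  have dX : ∀ i, DifferentiableAt ℝ (fun y => X y i) x :=
    fun i => (hXc i).differentiable (by simp) x
  have dpdψ : ∀ j, DifferentiableAt ℝ (pd j ψ) x :=
    fun j => (hpdψ j).differentiable one_ne_zero x
  have hRadd : ∀ i : Fin 3,
      pd i (fun y => X y 0 * pd 0 ψ y + X y 1 * pd 1 ψ y) x
        = pd i (fun y => X y 0) x * pd 0 ψ x + X x 0 * pd i (pd 0 ψ) x
          + (pd i (fun y => X y 1) x * pd 1 ψ x + X x 1 * pd i (pd 1 ψ) x) := by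
    intro i
    rw [pd_add i (fun y => X y 0 * pd 0 ψ y) (fun y => X y 1 * pd 1 ψ y) x
        ((dX 0).mul (dpdψ 0)) ((dX 1).mul (dpdψ 1)),
      pd_mul i (fun y => X y 0) (pd 0 ψ) x (dX 0) (dpdψ 0),
      pd_mul i (fun y => X y 1) (pd 1 ψ) x (dX 1) (dpdψ 1)]
  have hYv0 : Y x 0 = pd 1 ψ x := congrFun hY0f x
  have hYv1 : Y x 1 = -(pd 0 ψ x) := congrFun hY1f x
  have hs01 : pd 0 (pd 1 ψ) x = pd 1 (pd 0 ψ) x := pd_comm ψ hψ x 0 1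
  constructor
  · -- component 0
    rw [hsum, hRadd 1]
    simp only [adv]
    rw [Fin.sum_univ_three, Fin.sum_univ_three, hY2z 0 x, hX2z 0 x, hY0f, hYv0, hYv1]
    rw [hs01]
    linear_combination (-(pd 1 ψ x)) * hdiv
  · -- component 1
    rw [hsum, hRadd 0]
    simp only [adv]
    rw [Fin.sum_univ_three, Fin.sum_univ_three, hY2z 1 x, hX2z 1 x, hY1f, hYv0, hYv1]
    rw [pd_neg 0 (pd 0 ψ) x, pd_neg 1 (pd 0 ψ) x]
    rw [hs01]
    linear_combination (pd 0 ψ x) * hdiv
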